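/- The subprocess relation ≤ on branching processes of a fixed Petri net N₀ is a partial order up to isomorphism: it is reflexive and transitive, and if B₁ ≤ B₂ and B₂ ≤ B₁ then B₁ ≅ B₂. -/

import Mathlib

namespace PG

/-- A (pre-)Petri net: places `P`, transitions `T`, flow maps and an initial marking.
Markings are sets of places (the nets considered are safe). -/
structure PreNet (P T : Type) : Type where
  pre : T → Set P
  post : T → Set P
  init : Set P

namespace PreNet

variable {P T : Type}

/-- A transition is enabled at a marking if its preset is contained in it. -/
def enabled (N : PreNet P T) (M : Set P) (t : T) : Prop := N.pre t ⊆ M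

/-- Firing a transition. -/
def fire (N : PreNet P T) (M : Set P) (t : T) : Set P := (M \ N.pre t) ∪ N.post t

/-- `Fires N M l M'` : firing the sequence `l` of (successively enabled) transitions
from `M` yields `M'`. -/
inductive Fires (N : PreNet P T) : Set P → List T → Set P → Prop
  | nil (M : Set P) : Fires N M [] M
  | cons {M M' : Set P} {t : T} {l : List T} :
      N.enabled M t → Fires N (N.fire M t) l M' → Fires N M (t :: l) M'

/-- Reachable markings. -/
def reachable (N : PreNet P T) (M : Set P) : Prop := ∃ l : List T, N.Fires N.init l M

/-- Safety: firing never puts a token on an already occupied place, so markings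
may be taken as sets of places. -/
def Safe (N : PreNet P T) : Prop :=
  ∀ M, N.reachable M → ∀ t, N.enabled M t → (M \ N.pre t) ∩ N.post t = ∅

/-- The flow relation on nodes. -/
def flow (N : PreNet P T) : P ⊕ T → P ⊕ T → Prop
  | Sum.inl p, Sum.inr t => p ∈ N.pre t
  | Sum.inr t, Sum.inl p => p ∈ N.post t
  | _, _ => False

/-- Causal order: `x ≤ y` iff `x F⁺ y` or `x = y`. -/
def le (N : PreNet P T) : P ⊕ T → P ⊕ T → Prop := Relation.ReflTransGen N.flow

/-- Strict causal order `x F⁺ y`. -/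
def lt (N : PreNet P T) : P ⊕ T → P ⊕ T → Prop := Relation.TransGen N.flow

/-- Conflict of two nodes. -/
def conflict (N : PreNet P T) (x y : P ⊕ T) : Prop :=
  ∃ t₁ t₂ : T, t₁ ≠ t₂ ∧ (N.pre t₁ ∩ N.pre t₂).Nonempty ∧
    N.le (Sum.inr t₁) x ∧ N.le (Sum.inr t₂) y

/-- Concurrency of two nodes: neither causally related nor in conflict. -/
def concurrent (N : PreNet P T) (x y : P ⊕ T) : Prop :=
  ¬ N.le x y ∧ ¬ N.le y x ∧ ¬ N.conflict x y

end PreNet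

/-- Well-formedness of a Petri net: presets nonempty and finite, postsets finite. -/
structure IsPetriNet {P T : Type} (N : PreNet P T) : Prop where
  pre_nonempty : ∀ t, (N.pre t).Nonempty
  pre_finite : ∀ t, (N.pre t).Finite
  post_finite : ∀ t, (N.post t).Finite

/-- Occurrence net. -/
structure IsOccurrenceNet {P T : Type} (N : PreNet P T) : Prop where
  toIsPetriNet : IsPetriNet N
  acyclic : ∀ x, ¬ N.lt x x
  finitely_preceded : ∀ x, {y | N.le y x}.Finite
  place_pre_subsingleton : ∀ p : P, {t : T | p ∈ N.post t}.Subsingleton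
  no_self_conflict : ∀ t : T, ¬ N.conflict (Sum.inr t) (Sum.inr t)
  init_eq : N.init = {p | ∀ t, p ∉ N.post t}

/-- Net homomorphism: preserves presets, postsets and the initial marking bijectively. -/
structure IsNetHom {P₁ T₁ P₂ T₂ : Type} (N₁ : PreNet P₁ T₁) (N₂ : PreNet P₂ T₂)
    (fp : P₁ → P₂) (ft : T₁ → T₂) : Prop where
  pre_bij : ∀ t, Set.BijOn fp (N₁.pre t) (N₂.pre (ft t))
  post_bij : ∀ t, Set.BijOn fp (N₁.post t) (N₂.post (ft t))
  init_bij : Set.BijOn fp N₁.init N₂.init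

/-- `(N, (fp, ft))` is a branching process of `N₀`. -/
structure IsBranchingProcess {P₀ T₀ P T : Type} (N₀ : PreNet P₀ T₀)
    (N : PreNet P T) (fp : P → P₀) (ft : T → T₀) : Prop where
  occ : IsOccurrenceNet N
  hom : IsNetHom N N₀ fp ft
  unique : ∀ t₁ t₂ : T, N.pre t₁ = N.pre t₂ → ft t₁ = ft t₂ → t₁ = t₂

/-- The subprocess relation `B₁ ≤ B₂` between branching processes of the same net:
existence of an injective homomorphism commuting with the projections. -/
def BPle {P₀ T₀ P₁ T₁ P₂ T₂ : Type} (N₁ : PreNet P₁ T₁) (fp₁ : P₁ → P₀) (ft₁ : T₁ → T₀)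
    (N₂ : PreNet P₂ T₂) (fp₂ : P₂ → P₀) (ft₂ : T₂ → T₀) : Prop :=
  ∃ (gp : P₁ → P₂) (gt : T₁ → T₂),
    IsNetHom N₁ N₂ gp gt ∧ fp₂ ∘ gp = fp₁ ∧ ft₂ ∘ gt = ft₁ ∧
    Function.Injective gp ∧ Function.Injective gt

/-- Isomorphism `B₁ ≅ B₂` of branching processes: a bijective homomorphism
commuting with the projections. -/
def BPEquiv {P₀ T₀ P₁ T₁ P₂ T₂ : Type} (N₁ : PreNet P₁ T₁) (fp₁ : P₁ → P₀) (ft₁ : T₁ → T₀)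
    (N₂ : PreNet P₂ T₂) (fp₂ : P₂ → P₀) (ft₂ : T₂ → T₀) : Prop :=
  ∃ (gp : P₁ → P₂) (gt : T₁ → T₂),
    IsNetHom N₁ N₂ gp gt ∧ fp₂ ∘ gp = fp₁ ∧ ft₂ ∘ gt = ft₁ ∧
    Function.Bijective gp ∧ Function.Bijective gt

section Future

variable {P T : Type}

/-- Nodes of the future of a cut `C`: every place of `C` is a causal predecessor
of, or concurrent to, the node. -/
def futNode (N : PreNet P T) (C : Set P) (x : P ⊕ T) : Prop :=
  ∀ p ∈ C, N.le (Sum.inl p) x ∨ N.concurrent (Sum.inl p) x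

abbrev FutP (N : PreNet P T) (C : Set P) : Type := {p : P // futNode N C (Sum.inl p)}
abbrev FutT (N : PreNet P T) (C : Set P) : Type := {t : T // futNode N C (Sum.inr t)}

/-- The future `Fut(B, C)` of a cut `C`: nodes as above, flow maps restricted,
initial marking `C`. -/
def futNet (N : PreNet P T) (C : Set P) : PreNet (FutP N C) (FutT N C) where
  pre t := {p | p.1 ∈ N.pre t.1}
  post t := {p | p.1 ∈ N.post t.1}
  init := {p | p.1 ∈ C}

end Future

section Lkc

variable {P T P₀ T₀ : Type}

/-- The last known cut `lkc(t)` of a transition. -/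
def lkc (N : PreNet P T) (t : T) : Set P :=
  {p | ¬ N.lt (Sum.inl p) (Sum.inr t) ∧
    ∀ t' : T, p ∈ N.post t' → N.le (Sum.inr t') (Sum.inr t)}

/-- The last known marking `lkm(t) = π(lkc(t))`. -/
def lkm (N : PreNet P T) (fp : P → P₀) (t : T) : Set P₀ := fp '' lkc N t

/-- Partial repetition cuts `prc(t₁, t₂)`. -/
def prc (N : PreNet P T) (fp : P → P₀) (t₁ t₂ : T) : Prop :=
  lkm N fp t₁ = lkm N fp t₂ ∧ lkc N t₁ \ N.post t₁ = lkc N t₂ \ N.post t₂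

/-- A loop of partial repetition cuts: `prc(t₁, t₂)` with `t₁ < t₂`. -/
def prcLoop (N : PreNet P T) (fp : P → P₀) (t₁ t₂ : T) : Prop :=
  prc N fp t₁ t₂ ∧ N.lt (Sum.inr t₁) (Sum.inr t₂)

end Lkc

section Glue

variable {P T P₀ T₀ : Type}

/-- Places of the cut-and-glued process `B - Fut(B,C₂) + Fut(B,C₁)'`:
left places are those of `B` outside `Fut(B,C₂)` (keeping `C₂`), right places
are the fresh copies of the places of `Fut(B,C₁)` other than its initial marking. -/
def gluedPProp (N : PreNet P T) (C₁ C₂ : Set P) : P ⊕ P → Prop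
  | Sum.inl p => ¬ futNode N C₂ (Sum.inl p) ∨ p ∈ C₂
  | Sum.inr p => futNode N C₁ (Sum.inl p) ∧ p ∉ C₁

/-- Transitions of the cut-and-glued process. -/
def gluedTProp (N : PreNet P T) (C₁ C₂ : Set P) : T ⊕ T → Prop
  | Sum.inl t => ¬ futNode N C₂ (Sum.inr t)
  | Sum.inr t => futNode N C₁ (Sum.inr t)

abbrev GluedP (N : PreNet P T) (C₁ C₂ : Set P) : Type := {x : P ⊕ P // gluedPProp N C₁ C₂ x}
abbrev GluedT (N : PreNet P T) (C₁ C₂ : Set P) : Type := {x : T ⊕ T // gluedTProp N C₁ C₂ x}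

/-- The cut-and-glued object `B_{C₁ → C₂} = B - Fut(B, C₂) + Fut(B, C₁)'`,
where the copy of `Fut(B, C₁)` is glued along `C₂` via the identification
`e : C₂ → C₁`. -/
def gluedNet (N : PreNet P T) (C₁ C₂ : Set P) (e : P → P) :
    PreNet (GluedP N C₁ C₂) (GluedT N C₁ C₂) where
  pre t :=
    match t.1 with
    | Sum.inl t' => {x | ∃ q ∈ N.pre t', x.1 = Sum.inl q}
    | Sum.inr t' => {x | ∃ q ∈ N.pre t',
        (q ∉ C₁ ∧ x.1 = Sum.inr q) ∨ (q ∈ C₁ ∧ ∃ p ∈ C₂, e p = q ∧ x.1 = Sum.inl p)}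
  post t :=
    match t.1 with
    | Sum.inl t' => {x | ∃ q ∈ N.post t', x.1 = Sum.inl q}
    | Sum.inr t' => {x | ∃ q ∈ N.post t',
        (q ∉ C₁ ∧ x.1 = Sum.inr q) ∨ (q ∈ C₁ ∧ ∃ p ∈ C₂, e p = q ∧ x.1 = Sum.inl p)}
  init := {x | ∃ q ∈ N.init, x.1 = Sum.inl q}

/-- Projection of the glued process to the original underlying net (places). -/
def gluedFp {N : PreNet P T} {C₁ C₂ : Set P} (fp : P → P₀) (x : GluedP N C₁ C₂) : P₀ :=
  Sum.elim fp fp x.1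

/-- Projection of the glued process to the original underlying net (transitions). -/
def gluedFt {N : PreNet P T} {C₁ C₂ : Set P} (ft : T → T₀) (x : GluedT N C₁ C₂) : T₀ :=
  Sum.elim ft ft x.1

end Glue

section Game

/-- A Petri game: an underlying net whose places are partitioned into system
places (`system`) and environment places (the rest), plus a set of bad markings. -/
structure PetriGame (P₀ T₀ : Type) : Type where
  net : PreNet P₀ T₀
  system : Set P₀
  bad : Set (Set P₀)

variable {P₀ T₀ P T : Type}

/-- Winning strategy of a Petri game: a branching process of the underlying net
satisfying justified refusal, (global) safety, determinism and deadlock avoidance. -/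
structure IsWinningStrategy (G : PetriGame P₀ T₀) (N : PreNet P T)
    (fp : P → P₀) (ft : T → T₀) : Prop where
  isBP : IsBranchingProcess G.net N fp ft
  justified_refusal : ∀ C : Set P,
    C.Pairwise (fun x y => N.concurrent (Sum.inl x) (Sum.inl y)) →
    ∀ t₀ : T₀, fp '' C = G.net.pre t₀ →
    (¬ ∃ t : T, ft t = t₀ ∧ N.pre t = C) →
    ∃ p ∈ C, fp p ∈ G.system ∧ t₀ ∉ ft '' {t : T | p ∈ N.pre t}
  safety : ∀ M, N.reachable M → fp '' M ∉ G.bad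
  determinism : ∀ p : P, fp p ∈ G.system → ∀ M, N.reachable M → p ∈ M →
    {t : T | p ∈ N.pre t ∧ N.enabled M t}.Subsingleton
  deadlock_avoiding : ∀ M, N.reachable M →
    (∃ t₀ : T₀, G.net.enabled (fp '' M) t₀) → ∃ t : T, N.enabled M t

/-- The synthesis problem: existence of a winning strategy. -/
def HasWinningStrategy (G : PetriGame P₀ T₀) : Prop :=
  ∃ (P T : Type) (N : PreNet P T) (fp : P → P₀) (ft : T → T₀),
    IsWinningStrategy G N fp ft

/-- `K`-player Petri game: every reachable marking has at most `K` tokens. -/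
def PetriGame.IsKPlayer (G : PetriGame P₀ T₀) (K : ℕ) : Prop :=
  ∀ M, G.net.reachable M → M.Finite ∧ M.ncard ≤ K

end Game

section Seg

variable {P₀ T₀ P T : Type}

/-- A maximally repeated strategy: partial repetition cuts have isomorphic futures. -/
def MaximallyRepeated (N : PreNet P T) (fp : P → P₀) (ft : T → T₀) : Prop :=
  ∀ t₁ t₂ : T, prc N fp t₁ t₂ →
    BPEquiv (futNet N (lkc N t₁)) (fun p => fp p.1) (fun s => ft s.1)
            (futNet N (lkc N t₂)) (fun p => fp p.1) (fun s => ft s.1)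

/-- Conditions (1) and (2) of a synchronisation segment of `t`:
`S ≤ Fut(B, lkc(t))` and every transition of the future not belonging to `S`
either has all places of its preset causal successors of `t`, or is a partial
repetition of a transition inside a loop of `S`. -/
def SegCond (N₀ : PreNet P₀ T₀) (N : PreNet P T) (fp : P → P₀) (ft : T → T₀) (t : T)
    {Ps Ts : Type} (S : PreNet Ps Ts) (fps : Ps → P₀) (fts : Ts → T₀) : Prop :=
  IsBranchingProcess { N₀ with init := lkm N fp t } S fps fts ∧
  ∃ (gp : Ps → FutP N (lkc N t)) (gt : Ts → FutT N (lkc N t)),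
    IsNetHom S (futNet N (lkc N t)) gp gt ∧
    (∀ p, fp (gp p).1 = fps p) ∧ (∀ s, ft (gt s).1 = fts s) ∧
    Function.Injective gp ∧ Function.Injective gt ∧
    ∀ t' : FutT N (lkc N t), t' ∉ Set.range gt →
      (∀ q ∈ N.pre t'.1, N.le (Sum.inr t) (Sum.inl q)) ∨
      (∃ s₁ s₂ s₃ : Ts, prcLoop N fp (gt s₁).1 (gt s₂).1 ∧
        N.le (Sum.inr (gt s₃).1) (Sum.inr (gt s₂).1) ∧ prc N fp t'.1 (gt s₃).1)

/-- `S` is a synchronisation segment `Seg(t)`: a smallest branching process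
(w.r.t. the subprocess relation) satisfying the segment conditions. -/
def IsSyncSegment (N₀ : PreNet P₀ T₀) (N : PreNet P T) (fp : P → P₀) (ft : T → T₀) (t : T)
    {Ps Ts : Type} (S : PreNet Ps Ts) (fps : Ps → P₀) (fts : Ts → T₀) : Prop :=
  SegCond N₀ N fp ft t S fps fts ∧
  ∀ (Ps' Ts' : Type) (S' : PreNet Ps' Ts') (fps' : Ps' → P₀) (fts' : Ts' → T₀),
    SegCond N₀ N fp ft t S' fps' fts' → BPle S fps fts S' fps' fts'

end Seg

end PG

/-!
Reflexivity and transitivity come from identities and composition of homomorphisms. For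
antisymmetry, the key fact is that an endomorphism of a branching process commuting with the
projection is the identity. This follows by well-founded induction along the flow relation,
which is well-founded because the net is acyclic and finitely preceded. A place is fixed once
its input transition is, since the projection is injective on postsets and on the initial
marking. A transition is fixed once its preset is, by the uniqueness condition of branching
processes. Composing the embeddings `B₂ → B₁ → B₂` gives such an endomorphism of `B₂`, so
`B₁ → B₂` is also surjective.
-/

namespace PG

variable {P₀ T₀ P T P₁ T₁ P₂ T₂ P₃ T₃ : Type}

namespace IsNetHom

theorem id (N : PreNet P T) : IsNetHom N N id id :=
  ⟨fun t => (N.pre t).bijOn_id, fun t => (N.post t).bijOn_id, N.init.bijOn_id⟩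

theorem comp {N₁ : PreNet P₁ T₁} {N₂ : PreNet P₂ T₂} {N₃ : PreNet P₃ T₃}
    {gp : P₁ → P₂} {gt : T₁ → T₂} {hp : P₂ → P₃} {ht : T₂ → T₃}
    (hh : IsNetHom N₂ N₃ hp ht) (hg : IsNetHom N₁ N₂ gp gt) :
    IsNetHom N₁ N₃ (hp ∘ gp) (ht ∘ gt) where
  pre_bij t := (hh.pre_bij (gt t)).comp (hg.pre_bij t)
  post_bij t := (hh.post_bij (gt t)).comp (hg.post_bij t)
  init_bij := hh.init_bij.comp hg.init_bij

end IsNetHom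

theorem IsOccurrenceNet.wellFounded_flow {N : PreNet P T} (hN : IsOccurrenceNet N) :
    WellFounded N.flow := by
  have : IsStrictOrder (P ⊕ T) N.lt :=
    { irrefl := hN.acyclic, trans := fun _ _ _ => Relation.TransGen.trans }
  refine ⟨fun x => (Set.WellFoundedOn.acc_iff_wellFoundedOn.out 0 1).2 ?_⟩
  exact (Set.Finite.wellFoundedOn (r := N.lt) (hN.finitely_preceded x)).mono'
    fun _ _ _ _ h => Relation.TransGen.single h

namespace IsBranchingProcess

section Endomorphism

variable {N₀ : PreNet P₀ T₀} {B : PreNet P T} {fp : P → P₀} {ft : T → T₀}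
  {gp : P → P} {gt : T → T}

theorem endo_place_eq_self (hB : IsBranchingProcess N₀ B fp ft) (hg : IsNetHom B B gp gt)
    (hfp : fp ∘ gp = fp) (p : P) (hin : ∀ t, p ∈ B.post t → gt t = t) : gp p = p := by
  by_cases hp : ∃ t, p ∈ B.post t
  · obtain ⟨t, hpt⟩ := hp
    have hgp : gp p ∈ B.post t := hin t hpt ▸ (hg.post_bij t).mapsTo hpt
    exact (hB.hom.post_bij t).injOn hgp hpt (congrFun hfp p)
  · have hinit : p ∈ B.init := by
      rw [hB.occ.init_eq]
      exact fun t ht => hp ⟨t, ht⟩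
    exact hB.hom.init_bij.injOn (hg.init_bij.mapsTo hinit) hinit (congrFun hfp p)

theorem endo_transition_eq_self (hB : IsBranchingProcess N₀ B fp ft) (hg : IsNetHom B B gp gt)
    (hft : ft ∘ gt = ft) (t : T) (hpre : ∀ q ∈ B.pre t, gp q = q) : gt t = t := by
  have hpre_eq : B.pre (gt t) = B.pre t := by
    rw [← (hg.pre_bij t).image_eq]
    exact (Set.image_congr hpre).trans (Set.image_id _)
  exact hB.unique _ _ hpre_eq (congrFun hft t)

theorem endo_eq_id (hB : IsBranchingProcess N₀ B fp ft) (hg : IsNetHom B B gp gt)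
    (hfp : fp ∘ gp = fp) (hft : ft ∘ gt = ft) : gp = id ∧ gt = id := by
  have fixed : ∀ x : P ⊕ T, Sum.elim (fun p => gp p = p) (fun t => gt t = t) x := by
    intro x
    induction x using hB.occ.wellFounded_flow.induction with
    | _ x ih =>
      cases x with
      | inl p => exact endo_place_eq_self hB hg hfp p fun t ht => ih (Sum.inr t) ht
      | inr t => exact endo_transition_eq_self hB hg hft t fun q hq => ih (Sum.inl q) hq
  exact ⟨funext fun p => fixed (Sum.inl p), funext fun t => fixed (Sum.inr t)⟩

end Endomorphism

end IsBranchingProcess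

section Subprocess

variable {B₁ : PreNet P₁ T₁} {fp₁ : P₁ → P₀} {ft₁ : T₁ → T₀}
  {B₂ : PreNet P₂ T₂} {fp₂ : P₂ → P₀} {ft₂ : T₂ → T₀}
  {B₃ : PreNet P₃ T₃} {fp₃ : P₃ → P₀} {ft₃ : T₃ → T₀}

theorem BPle.refl (B : PreNet P T) (fp : P → P₀) (ft : T → T₀) : BPle B fp ft B fp ft :=
  ⟨id, id, IsNetHom.id B, rfl, rfl, Function.injective_id, Function.injective_id⟩

theorem BPle.trans (h₁₂ : BPle B₁ fp₁ ft₁ B₂ fp₂ ft₂) (h₂₃ : BPle B₂ fp₂ ft₂ B₃ fp₃ ft₃) :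
    BPle B₁ fp₁ ft₁ B₃ fp₃ ft₃ := by
  obtain ⟨gp, gt, hg, hgp, hgt, hgp_inj, hgt_inj⟩ := h₁₂
  obtain ⟨hp, ht, hh, hhp, hht, hhp_inj, hht_inj⟩ := h₂₃
  refine ⟨hp ∘ gp, ht ∘ gt, hh.comp hg, ?_, ?_, hhp_inj.comp hgp_inj, hht_inj.comp hgt_inj⟩
  · rw [← Function.comp_assoc, hhp, hgp]
  · rw [← Function.comp_assoc, hht, hgt]

theorem BPle.antisymm (h₁₂ : BPle B₁ fp₁ ft₁ B₂ fp₂ ft₂) (h₂₁ : BPle B₂ fp₂ ft₂ B₁ fp₁ ft₁)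
    (hB₂ : IsBranchingProcess N₀ B₂ fp₂ ft₂) :
    BPEquiv B₁ fp₁ ft₁ B₂ fp₂ ft₂ := by
  obtain ⟨gp, gt, hg, hgp, hgt, hgp_inj, hgt_inj⟩ := h₁₂
  obtain ⟨hp, ht, hh, hhp, hht, -, -⟩ := h₂₁
  obtain ⟨hround_p, hround_t⟩ := hB₂.endo_eq_id (hg.comp hh)
    (by rw [← Function.comp_assoc, hgp, hhp]) (by rw [← Function.comp_assoc, hgt, hht])
  exact ⟨gp, gt, hg, hgp, hgt, ⟨hgp_inj, Function.RightInverse.surjective (congrFun hround_p)⟩,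
    ⟨hgt_inj, Function.RightInverse.surjective (congrFun hround_t)⟩⟩

end Subprocess

/-- The subprocess relation `≤` on branching processes of a fixed
Petri net `N₀` is a partial order up to isomorphism: it is reflexive, transitive,
and antisymmetric up to isomorphism. -/
theorem subprocess_partial_order {P₀ T₀ : Type} (N₀ : PreNet P₀ T₀) :
    (∀ (P T : Type) (B : PreNet P T) (fp : P → P₀) (ft : T → T₀),
      IsBranchingProcess N₀ B fp ft → BPle B fp ft B fp ft) ∧
    (∀ (P₁ T₁ P₂ T₂ P₃ T₃ : Type)
       (B₁ : PreNet P₁ T₁) (fp₁ : P₁ → P₀) (ft₁ : T₁ → T₀)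
       (B₂ : PreNet P₂ T₂) (fp₂ : P₂ → P₀) (ft₂ : T₂ → T₀)
       (B₃ : PreNet P₃ T₃) (fp₃ : P₃ → P₀) (ft₃ : T₃ → T₀),
      IsBranchingProcess N₀ B₁ fp₁ ft₁ → IsBranchingProcess N₀ B₂ fp₂ ft₂ →
      IsBranchingProcess N₀ B₃ fp₃ ft₃ →
      BPle B₁ fp₁ ft₁ B₂ fp₂ ft₂ → BPle B₂ fp₂ ft₂ B₃ fp₃ ft₃ →
      BPle B₁ fp₁ ft₁ B₃ fp₃ ft₃) ∧
    (∀ (P₁ T₁ P₂ T₂ : Type)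
       (B₁ : PreNet P₁ T₁) (fp₁ : P₁ → P₀) (ft₁ : T₁ → T₀)
       (B₂ : PreNet P₂ T₂) (fp₂ : P₂ → P₀) (ft₂ : T₂ → T₀),
      IsBranchingProcess N₀ B₁ fp₁ ft₁ → IsBranchingProcess N₀ B₂ fp₂ ft₂ →
      BPle B₁ fp₁ ft₁ B₂ fp₂ ft₂ → BPle B₂ fp₂ ft₂ B₁ fp₁ ft₁ →
      BPEquiv B₁ fp₁ ft₁ B₂ fp₂ ft₂) := by
  exact ⟨fun _ _ B fp ft _ => BPle.refl B fp ft,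
    fun _ _ _ _ _ _ _ _ _ _ _ _ _ _ _ _ _ _ h₁₂ h₂₃ => h₁₂.trans h₂₃,
    fun _ _ _ _ _ _ _ _ _ _ _ hB₂ h₁₂ h₂₁ => h₁₂.antisymm h₂₁ hB₂⟩

end PG
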